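/- If a simple graph G on n vertices is bipartite, then every coefficient of x^{n−k} in π(G,x) for odd k vanishes; i.e., π(G,x) involves only powers of x congruent to n modulo 2. -/
import Mathlib


open Polynomial Matrix SimpleGraph

/-- The permanental polynomial of a graph: per(xI - A(G)). -/
noncomputable def permPoly {V : Type*} [Fintype V] [DecidableEq V]
    (G : SimpleGraph V) [DecidableRel G.Adj] : Polynomial ℤ :=
  ((X : Polynomial ℤ) • (1 : Matrix V V (Polynomial ℤ)) - G.adjMatrix (Polynomial ℤ)).permanent

theorem permPoly_bipartite_odd_coeff {V : Type*} [Fintype V] [DecidableEq V]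
    (G : SimpleGraph V) [DecidableRel G.Adj] (h : G.Colorable 2) :
    ∀ k : ℕ, Odd k → k ≤ Fintype.card V →
      (permPoly G).coeff (Fintype.card V - k) = 0 := by
  classical
  obtain ⟨C⟩ := h
  intro k hk hkn
  unfold permPoly Matrix.permanent
  rw [Polynomial.finset_sum_coeff]
  apply Finset.sum_eq_zero
  intro σ _
  set M : Matrix V V (Polynomial ℤ) :=
    (X : Polynomial ℤ) • (1 : Matrix V V (Polynomial ℤ)) - G.adjMatrix (Polynomial ℤ) with hMdef
  set S : Finset V := Finset.univ.filter (fun i => ¬ σ i = i) with hSdef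
  set F : Finset V := Finset.univ.filter (fun i => σ i = i) with hFdef
  have hsplit : (∏ i, M (σ i) i) =
      (∏ i ∈ F, M (σ i) i) * (∏ i ∈ S, M (σ i) i) :=
    (Finset.prod_filter_mul_prod_filter_not Finset.univ (fun i => σ i = i) _).symm
  have hF : (∏ i ∈ F, M (σ i) i) = X ^ F.card := by
    rw [Finset.prod_congr rfl (fun i hi => ?_), Finset.prod_const]
    have hi' : σ i = i := (Finset.mem_filter.mp hi).2
    simp [hMdef, Matrix.sub_apply, Matrix.smul_apply, Matrix.one_apply, hi',
      SimpleGraph.adjMatrix_apply, G.irrefl]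
  have hS : (∏ i ∈ S, M (σ i) i) =
      Polynomial.C (∏ i ∈ S, (-(if G.Adj (σ i) i then (1:ℤ) else 0))) := by
    rw [map_prod]
    refine Finset.prod_congr rfl (fun i hi => ?_)
    have hi' : ¬ σ i = i := (Finset.mem_filter.mp hi).2
    simp [hMdef, Matrix.sub_apply, Matrix.smul_apply, Matrix.one_apply, hi',
      SimpleGraph.adjMatrix_apply, apply_ite Polynomial.C]
  rw [hsplit, hF, hS, mul_comm, Polynomial.coeff_C_mul, Polynomial.coeff_X_pow]
  by_cases hadj : ∀ i ∈ S, G.Adj (σ i) i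
  · -- parity argument: S has even cardinality
    have hmemS : ∀ i, i ∈ S ↔ ¬ σ i = i := by
      intro i; simp [hSdef]
    have hσS : ∀ i ∈ S, σ i ∈ S := by
      intro i hi
      rw [hmemS] at hi ⊢
      exact fun e => hi (σ.injective e)
    have hσS' : ∀ i ∈ S, σ.symm i ∈ S := by
      intro i hi
      rw [hmemS] at hi ⊢
      intro e
      have h1 : σ.symm i = i := by rw [← e, σ.apply_symm_apply]
      rw [h1] at e
      exact hi e
    have hfin2 : ∀ a b : Fin 2, a ≠ b → b ≠ 0 → a = 0 := by decide
    have hcard : (S.filter (fun i => C i = 0)).card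
        = (S.filter (fun i => ¬ C i = 0)).card := by
      apply Finset.card_bij' (fun i _ => σ i) (fun j _ => σ.symm j)
      · intro a ha
        simp only [Finset.mem_filter] at ha ⊢
        refine ⟨hσS a ha.1, ?_⟩
        have hadj' := hadj a ha.1
        have := (C.valid hadj').symm
        rw [ha.2] at this
        exact fun e => this e.symm
      · intro b hb
        simp only [Finset.mem_filter] at hb ⊢
        refine ⟨hσS' b hb.1, ?_⟩
        have hb1 : σ.symm b ∈ S := hσS' b hb.1
        have hadj' := hadj (σ.symm b) hb1
        rw [σ.apply_symm_apply] at hadj'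
        exact hfin2 _ _ (C.valid hadj').symm hb.2
      · intro a _; exact σ.symm_apply_apply a
      · intro b _; exact σ.apply_symm_apply b
    have hevenS : Even S.card := by
      have := Finset.card_filter_add_card_filter_not
        (s := S) (p := fun i => C i = 0)
      refine ⟨(S.filter (fun i => C i = 0)).card, ?_⟩
      omega
    have hFS : F.card + S.card = Fintype.card V := by
      have := Finset.card_filter_add_card_filter_not
        (s := Finset.univ) (p := fun i => σ i = i)
      simpa [hFdef, hSdef] using this
    have hne : F.card ≠ Fintype.card V - k := by
      intro e
      have hSk : S.card = k := by omega
      rw [hSk] at hevenS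
      exact (Nat.not_even_iff_odd.mpr hk) hevenS
    rw [if_neg (fun e => hne e.symm), mul_zero]
  · push_neg at hadj
    obtain ⟨i, hi, hnadj⟩ := hadj
    have : (∏ i ∈ S, (-(if G.Adj (σ i) i then (1:ℤ) else 0))) = 0 := by
      apply Finset.prod_eq_zero hi
      simp [hnadj]
    rw [this]
    simp
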